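/- For every integer n ≥ 3 and all real numbers s, g: s^n − 72·n(n−1)·s^{n−2}·g² − 64·ω_{n,3}·g³·s^{n−3} + Σ_{l=4}^{n} ω_{n,l}·s^{n−l}·(12g²)^{(l−4−π_l)/2}·( (π_l−1)·192·g⁴ − π_l·768·g⁵ ) = Σ_{p=0}^{n} (1−p)·2^p·6^p·binom(n,p)·g^p·s^{n−p}, where π_l = 0 if l is even and π_l = 1 if l is odd, and ω_{n,l} = 2^{l−2−π_l}·3^{(2+l+π_l)/2}·binom(n,l)·(l−1). -/

import Mathlib

/-!
Writing `l = 2k + 4 + π_l`, the `l`-th generalized quasitopological term is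
`ω_{n,l} (12g²)^k c_π g^(4+π) s^(n-l)` with `c_0 = -192 = -2⁶·3` and `c_1 = -768 = -2⁸·3`, and the
powers of `2` and `3` in `ω_{n,l}` combine with these into exactly `(1 - l)·12^l`, the coefficient of
`g^l s^(n-l)` in the cosmological polynomial. The terms `l = 0, …, 3` of that polynomial are the
remaining explicit terms of the left-hand side (the term `l = 1` vanishes), so the identity holds
term by term.
-/

open Finset

section

variable {R : Type*} [CommRing R]

/-- The coefficient `ω_{n,l}` of the trivial generalized quasitopological terms. -/
def quasitopCoeff (n l : ℕ) : R :=
  2 ^ (l - 2 - l % 2) * 3 ^ ((2 + l + l % 2) / 2) * (n.choose l : R) * ((l : R) - 1)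

/-- The term `β_p Γ^p Σ^(n-p)` of the cosmological polynomial, with `β_p = -2^p (p-1) binom(n,p) 6^p`. -/
def cosmologicalTerm (n p : ℕ) (s g : R) : R :=
  (1 - (p : R)) * 2 ^ p * 6 ^ p * (n.choose p : R) * g ^ p * s ^ (n - p)

lemma cosmologicalTerm_of_lt {n p : ℕ} (h : n < p) (s g : R) : cosmologicalTerm n p s g = 0 := by
  simp [cosmologicalTerm, Nat.choose_eq_zero_of_lt h]

lemma cosmologicalTerm_zero (n : ℕ) (s g : R) : cosmologicalTerm n 0 s g = s ^ n := by
  simp [cosmologicalTerm]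

lemma cosmologicalTerm_one (n : ℕ) (s g : R) : cosmologicalTerm n 1 s g = 0 := by
  simp [cosmologicalTerm]

lemma cosmologicalTerm_two (n : ℕ) (s g : R) :
    cosmologicalTerm n 2 s g = -(72 * (n : R) * ((n : R) - 1) * s ^ (n - 2) * g ^ 2) := by
  have hchoose : (n.choose 2 : R) * 2 = n * (n - 1) := by
    rw [← Nat.cast_descFactorial_two, Nat.descFactorial_eq_factorial_mul_choose, Nat.factorial_two]
    push_cast
    ring
  simp only [cosmologicalTerm]
  linear_combination (-72 * g ^ 2 * s ^ (n - 2)) * hchoose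

lemma cosmologicalTerm_three (n : ℕ) (s g : R) :
    cosmologicalTerm n 3 s g = -(64 * quasitopCoeff n 3 * g ^ 3 * s ^ (n - 3)) := by
  simp only [cosmologicalTerm, quasitopCoeff]
  norm_num
  ring

private lemma twelve_pow (m : ℕ) : (12 : R) ^ m = 2 ^ m * 2 ^ m * 3 ^ m := by
  rw [← mul_pow, ← mul_pow]
  norm_num

lemma quasitopCoeff_even_term (n k : ℕ) (s g : R) :
    quasitopCoeff n (2 * k + 4) * s ^ (n - (2 * k + 4)) * (12 * g ^ 2) ^ k * (-192 * g ^ 4)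
      = cosmologicalTerm n (2 * k + 4) s g := by
  have hmod : (2 * k + 4) % 2 = 0 := by omega
  have e2 : 2 * k + 4 - 2 - 0 = 2 * k + 2 := by omega
  have e3 : (2 + (2 * k + 4) + 0) / 2 = k + 3 := by omega
  simp only [quasitopCoeff, cosmologicalTerm, hmod, e2, e3, mul_pow, twelve_pow,
    show (6 : R) = 2 * 3 by norm_num]
  push_cast
  ring

lemma quasitopCoeff_odd_term (n k : ℕ) (s g : R) :
    quasitopCoeff n (2 * k + 5) * s ^ (n - (2 * k + 5)) * (12 * g ^ 2) ^ k * (-768 * g ^ 5)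
      = cosmologicalTerm n (2 * k + 5) s g := by
  have hmod : (2 * k + 5) % 2 = 1 := by omega
  have e2 : 2 * k + 5 - 2 - 1 = 2 * k + 2 := by omega
  have e3 : (2 + (2 * k + 5) + 1) / 2 = k + 4 := by omega
  simp only [quasitopCoeff, cosmologicalTerm, hmod, e2, e3, mul_pow, twelve_pow,
    show (6 : R) = 2 * 3 by norm_num]
  push_cast
  ring

lemma quasitopCoeff_term {l : ℕ} (hl : 4 ≤ l) (n : ℕ) (s g : R) :
    quasitopCoeff n l * s ^ (n - l) * (12 * g ^ 2) ^ ((l - 4 - l % 2) / 2) *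
        ((((l % 2 : ℕ) : R) - 1) * 192 * g ^ 4 - ((l % 2 : ℕ) : R) * 768 * g ^ 5)
      = cosmologicalTerm n l s g := by
  obtain ⟨k, rfl | rfl⟩ : ∃ k, l = 2 * k + 4 ∨ l = 2 * k + 5 := ⟨(l - 4) / 2, by omega⟩
  · rw [← quasitopCoeff_even_term, show (2 * k + 4 - 4 - (2 * k + 4) % 2) / 2 = k by omega,
      show (2 * k + 4) % 2 = 0 by omega]
    push_cast
    ring
  · rw [← quasitopCoeff_odd_term, show (2 * k + 5 - 4 - (2 * k + 5) % 2) / 2 = k by omega,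
      show (2 * k + 5) % 2 = 1 by omega]
    push_cast
    ring

end

lemma Finset.sum_range_succ_eq_sum_range_add_sum_Icc {M : Type*} [AddCommMonoid M] (f : ℕ → M)
    (m n : ℕ) (hf : ∀ p, n < p → f p = 0) :
    ∑ p ∈ range (n + 1), f p = ∑ p ∈ range m, f p + ∑ p ∈ Icc m n, f p := by
  rcases le_or_gt m (n + 1) with hm | hm
  · rw [← Finset.Ico_add_one_right_eq_Icc, sum_range_add_sum_Ico f hm]
  · rw [Icc_eq_empty (by omega), sum_empty, add_zero]
    exact sum_subset (range_subset_range.2 hm.le) fun p hp hpn => hf p (by simpa using hpn)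

theorem stmt_15 (n : ℕ) (s g : ℝ) :
    let pl : ℕ → ℕ := fun l => l % 2
    let ω : ℕ → ℕ → ℝ := fun m l =>
      (2 : ℝ) ^ (l - 2 - pl l) * (3 : ℝ) ^ ((2 + l + pl l) / 2) *
        (m.choose l : ℝ) * ((l : ℝ) - 1)
    s ^ n - 72 * (n : ℝ) * ((n : ℝ) - 1) * s ^ (n - 2) * g ^ 2
        - 64 * ω n 3 * g ^ 3 * s ^ (n - 3)
        + ∑ l ∈ Finset.Icc 4 n, ω n l * s ^ (n - l) * (12 * g ^ 2) ^ ((l - 4 - pl l) / 2) *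
            (((pl l : ℝ) - 1) * 192 * g ^ 4 - (pl l : ℝ) * 768 * g ^ 5)
      = ∑ p ∈ Finset.range (n + 1),
          (1 - (p : ℝ)) * 2 ^ p * 6 ^ p * (n.choose p : ℝ) * g ^ p * s ^ (n - p) := by
  intro pl ω
  have hterms : ∀ l ∈ Icc 4 n,
      ω n l * s ^ (n - l) * (12 * g ^ 2) ^ ((l - 4 - pl l) / 2) *
        (((pl l : ℝ) - 1) * 192 * g ^ 4 - (pl l : ℝ) * 768 * g ^ 5) = cosmologicalTerm n l s g :=
    fun l hl => quasitopCoeff_term (mem_Icc.1 hl).1 n s g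
  change _ - 64 * quasitopCoeff n 3 * g ^ 3 * s ^ (n - 3) + _
    = ∑ p ∈ range (n + 1), cosmologicalTerm n p s g
  rw [sum_congr rfl hterms,
    sum_range_succ_eq_sum_range_add_sum_Icc _ 4 n fun p hp => cosmologicalTerm_of_lt hp s g,
    sum_range_succ, sum_range_succ, sum_range_succ, sum_range_one, cosmologicalTerm_zero,
    cosmologicalTerm_one, cosmologicalTerm_two, cosmologicalTerm_three]
  ring
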